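/- Let M > 0, sh > 0 and y_m ∈ (0,1) be real numbers. Set K = M·y_m·coth(M·y_m) − 1, P = 1 − y_m + y_m/sh, and A = 1/(1 + P·K). Define a₁(y) = A·(y_m/(P·y))·(1 − y + y/sh) + (1 − y_m/y)/P for y ∈ [y_m, 1], and a₂(y) = A·y_m·sinh(M·y)/(y·sinh(M·y_m)) for y ∈ (0, y_m]. Then K > 0; a₁''(y) + (2/y)·a₁'(y) = 0 on (y_m, 1); a₂''(y) + (2/y)·a₂'(y) = M²·a₂(y) on (0, y_m); a₁'(1) = sh·(1 − a₁(1)); a₁(y_m) = a₂(y_m) = A; and a₁'(y_m) = a₂'(y_m). -/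

import Mathlib

open Real Set Filter Topology

/-!
Both profiles have the form `u y / y`, and for such functions `a'' + (2 / y) a' = u'' / y`.
In the reacted shell `u` is affine, in the core it is a multiple of `sinh (M y)`, which gives the
two differential equations. The boundary conditions are then algebra: `A (1 + P K) = 1`, and both
fluxes at `y_m` equal `A K / y_m`. Finally `K > 0` says `x coth x > 1`, i.e. `sinh x < x cosh x`,
which holds because `x cosh x - sinh x` has derivative `x sinh x > 0`.
-/

lemma sinh_lt_mul_cosh {x : ℝ} (hx : 0 < x) : sinh x < x * cosh x := by
  have hmono : StrictMonoOn (fun t => t * cosh t - sinh t) (Ici 0) := by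
    refine strictMonoOn_of_deriv_pos (convex_Ici 0) (by fun_prop) fun t ht => ?_
    rw [interior_Ici] at ht
    have hd : HasDerivAt (fun t => t * cosh t - sinh t) (t * sinh t) t :=
      (((hasDerivAt_id' t).mul (hasDerivAt_cosh t)).sub (hasDerivAt_sinh t)).congr_deriv
        (by ring)
    rw [hd.deriv]
    exact mul_pos ht (sinh_pos_iff.2 ht)
  simpa using hmono self_mem_Ici hx.le hx

lemma one_lt_mul_coth {x : ℝ} (hx : 0 < x) : 1 < x * (cosh x / sinh x) := by
  rw [← mul_div_assoc, one_lt_div (sinh_pos_iff.2 hx)]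
  exact sinh_lt_mul_cosh hx

noncomputable def radialLaplacian (f : ℝ → ℝ) (y : ℝ) : ℝ :=
  deriv (deriv f) y + 2 / y * deriv f y

lemma Filter.EventuallyEq.radialLaplacian_eq {f g : ℝ → ℝ} {y : ℝ} (h : f =ᶠ[𝓝 y] g) :
    radialLaplacian f y = radialLaplacian g y := by
  rw [radialLaplacian, radialLaplacian, h.deriv.deriv_eq, h.deriv_eq]

lemma HasDerivAt.div_id {u : ℝ → ℝ} {u' y : ℝ} (hu : HasDerivAt u u' y) (hy : y ≠ 0) :
    HasDerivAt (fun t => u t / t) ((u' * y - u y) / y ^ 2) y :=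
  (hu.div (hasDerivAt_id' y) hy).congr_deriv (by ring)

lemma radialLaplacian_div_id {u u' : ℝ → ℝ} {u'' y : ℝ} (hy : y ≠ 0)
    (hu : ∀ᶠ t in 𝓝 y, HasDerivAt u (u' t) t) (hu' : HasDerivAt u' u'' y) :
    radialLaplacian (fun t => u t / t) y = u'' / y := by
  have hderiv : deriv (fun t => u t / t) =ᶠ[𝓝 y] fun t => (u' t * t - u t) / t ^ 2 := by
    filter_upwards [isOpen_ne.mem_nhds hy, hu] with t ht hut
    exact (hut.div_id ht).deriv
  have hderiv' : HasDerivAt (fun t => (u' t * t - u t) / t ^ 2)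
      ((u'' * y * y ^ 2 - (u' y * y - u y) * (2 * y)) / (y ^ 2) ^ 2) y :=
    (((hu'.mul (hasDerivAt_id' y)).sub hu.self_of_nhds).div ((hasDerivAt_id' y).pow 2)
      (pow_ne_zero 2 hy)).congr_deriv (by simp)
  rw [radialLaplacian, hderiv.deriv_eq, hderiv.eq_of_nhds, hderiv'.deriv]
  field_simp
  ring

lemma hasDerivAt_affine (c₀ c₁ t : ℝ) : HasDerivAt (fun t => c₀ + c₁ * t) c₁ t := by
  simpa using ((hasDerivAt_id t).const_mul c₁).const_add c₀

lemma radialLaplacian_affine_div (c₀ c₁ : ℝ) {y : ℝ} (hy : y ≠ 0) :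
    radialLaplacian (fun t => (c₀ + c₁ * t) / t) y = 0 := by
  rw [radialLaplacian_div_id hy (.of_forall (hasDerivAt_affine c₀ c₁)) (hasDerivAt_const y c₁),
    zero_div]

lemma deriv_affine_div (c₀ c₁ : ℝ) {y : ℝ} (hy : y ≠ 0) :
    deriv (fun t => (c₀ + c₁ * t) / t) y = -c₀ / y ^ 2 := by
  rw [((hasDerivAt_affine c₀ c₁ y).div_id hy).deriv]
  ring

lemma hasDerivAt_const_mul_sinh_mul (C M t : ℝ) :
    HasDerivAt (fun t => C * sinh (M * t)) (C * (cosh (M * t) * M)) t := by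
  simpa using (((hasDerivAt_id t).const_mul M).sinh).const_mul C

lemma radialLaplacian_sinh_div (C M : ℝ) {y : ℝ} (hy : y ≠ 0) :
    radialLaplacian (fun t => C * sinh (M * t) / t) y = M ^ 2 * (C * sinh (M * y) / y) := by
  have hu' : HasDerivAt (fun t => C * (cosh (M * t) * M)) (C * (sinh (M * y) * M * M)) y := by
    simpa using ((((hasDerivAt_id y).const_mul M).cosh).mul_const M).const_mul C
  rw [radialLaplacian_div_id hy (.of_forall (hasDerivAt_const_mul_sinh_mul C M)) hu']
  ring

lemma deriv_sinh_div (C M : ℝ) {y : ℝ} (hy : y ≠ 0) :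
    deriv (fun t => C * sinh (M * t) / t) y =
      C * (M * y * cosh (M * y) - sinh (M * y)) / y ^ 2 := by
  rw [((hasDerivAt_const_mul_sinh_mul C M y).div_id hy).deriv]
  ring

/-- Quantized-method second-stage (moving boundary) concentration profile for
the grain model in a spherical pellet with external mass transfer resistance,
where `coth x = cosh x / sinh x`. -/
theorem stmt3 (M sh ym : ℝ) (hM : 0 < M) (hsh : 0 < sh)
    (hym : ym ∈ Set.Ioo (0:ℝ) 1)
    (K P A : ℝ)
    (hK : K = M * ym * (Real.cosh (M * ym) / Real.sinh (M * ym)) - 1)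
    (hP : P = 1 - ym + ym / sh)
    (hA : A = 1 / (1 + P * K))
    (a₁ a₂ : ℝ → ℝ)
    (ha₁ : ∀ y, a₁ y = A * (ym / (P * y)) * (1 - y + y / sh) + (1 - ym / y) / P)
    (ha₂ : ∀ y, a₂ y = A * ym * Real.sinh (M * y) / (y * Real.sinh (M * ym))) :
    0 < K ∧
    (∀ y ∈ Set.Ioo ym 1, deriv (deriv a₁) y + (2 / y) * deriv a₁ y = 0) ∧
    (∀ y ∈ Set.Ioo (0:ℝ) ym,
      deriv (deriv a₂) y + (2 / y) * deriv a₂ y = M ^ 2 * a₂ y) ∧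
    deriv a₁ 1 = sh * (1 - a₁ 1) ∧
    (a₁ ym = A ∧ a₂ ym = A) ∧
    deriv a₁ ym = deriv a₂ ym := by
  obtain ⟨hym0, hym1⟩ := hym
  have hx : 0 < M * ym := mul_pos hM hym0
  have hKpos : 0 < K := hK ▸ sub_pos.2 (one_lt_mul_coth hx)
  have hPpos : 0 < P := hP ▸ by have := div_pos hym0 hsh; linarith
  have hA' : A * (1 + P * K) = 1 := by rw [hA]; field_simp
  have hs : sinh (M * ym) ≠ 0 := (sinh_pos_iff.2 hx).ne'
  have ha₁_nhds : ∀ y, 0 < y →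
      a₁ =ᶠ[𝓝 y] fun t => (ym * (A - 1) / P + (1 + A * ym * (1 / sh - 1)) / P * t) / t := by
    intro y hy
    filter_upwards [lt_mem_nhds hy] with t ht
    rw [ha₁]
    field_simp
    ring
  have ha₂_eq : a₂ = fun t => A * ym / sinh (M * ym) * sinh (M * t) / t :=
    funext fun t => by rw [ha₂]; ring
  have hda₁ : ∀ y, 0 < y → deriv a₁ y = -(ym * (A - 1) / P) / y ^ 2 := fun y hy =>
    (ha₁_nhds y hy).deriv_eq.trans (deriv_affine_div _ _ hy.ne')
  have hflux₁ : deriv a₁ ym = A * K / ym := by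
    rw [hda₁ ym hym0]
    field_simp
    linear_combination -hA'
  have hflux₂ : deriv a₂ ym = A * K / ym := by
    rw [ha₂_eq, deriv_sinh_div _ _ hym0.ne', hK]
    field_simp
  refine ⟨hKpos, fun y hy => ?_, fun y hy => ?_, ?_, ⟨?_, ?_⟩, hflux₁.trans hflux₂.symm⟩
  · have hy0 : 0 < y := hym0.trans hy.1
    exact (ha₁_nhds y hy0).radialLaplacian_eq.trans (radialLaplacian_affine_div _ _ hy0.ne')
  · rw [ha₂_eq]
    exact radialLaplacian_sinh_div _ _ hy.1.ne'
  · rw [hda₁ 1 one_pos, ha₁, hP]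
    field_simp
    ring
  · rw [ha₁, ← hP, div_self hym0.ne', sub_self, zero_div, add_zero]
    field_simp
  · rw [ha₂]
    field_simp
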